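/- The map u ↦ F(u) − u, where F(u) = (1/k)(min{T_k(a), r} − ∑_{i=1}^n max{a_i − u, 0}), attains its maximum over ℝ at u = a↓_k (the k-th largest entry of a), and this maximum value equals (1/k)·min{r − T_k(a), 0} ≤ 0. -/
import Mathlib


open Finset

/-- The entries of `a` rearranged in nonincreasing order. -/
noncomputable def sortDesc (n : ℕ) (a : Fin n → ℝ) : Fin n → ℝ :=
  fun i => a (Tuple.sort a i.rev)

/-- The sum of the `k` largest entries of `a`. -/
noncomputable def topKSum (n k : ℕ) (a : Fin n → ℝ) : ℝ :=
  ∑ i : Fin n, if (i : ℕ) < k then sortDesc n a i else 0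
/-- The function `F` from the KKT analysis. -/
noncomputable def Fproj (n k : ℕ) (r : ℝ) (a : Fin n → ℝ) : ℝ → ℝ :=
  fun u => (1 / (k : ℝ)) * (min (topKSum n k a) r - ∑ i : Fin n, max (a i - u) 0)

lemma sortDesc_antitone (n : ℕ) (a : Fin n → ℝ) : Antitone (sortDesc n a) := by
  intro i j hij
  exact Tuple.monotone_sort a (Fin.rev_le_rev.mpr hij)

lemma sum_comp_sortDesc (n : ℕ) (a : Fin n → ℝ) (g : ℝ → ℝ) :
    ∑ i : Fin n, g (sortDesc n a i) = ∑ i : Fin n, g (a i) :=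
  Equiv.sum_comp (Fin.revPerm.trans (Tuple.sort a)) (fun i => g (a i))

lemma sum_indicator_const (n k : ℕ) (hk : k ≤ n) (c : ℝ) :
    ∑ i : Fin n, (if (i : ℕ) < k then c else 0) = k * c := by
  rw [Fin.sum_univ_eq_sum_range (fun i => if i < k then c else 0) n,
    ← Finset.sum_filter]
  have : (Finset.range n).filter (· < k) = Finset.range k := by
    ext i; simp; omega
  rw [this, Finset.sum_const, Finset.card_range, nsmul_eq_mul]

/-- `u ↦ F(u) − u` attains its maximum at `u = a↓_k`, with maximum value
`(1/k)·min{r − T_k(a), 0} ≤ 0`. -/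
theorem stmt6 (n k : ℕ) (hn : 1 ≤ n) (hk1 : 1 ≤ k) (hk2 : k ≤ n) (r : ℝ)
    (a : Fin n → ℝ) :
    (∀ u : ℝ, Fproj n k r a u - u ≤
      Fproj n k r a (sortDesc n a ⟨k - 1, by omega⟩) - sortDesc n a ⟨k - 1, by omega⟩) ∧
    Fproj n k r a (sortDesc n a ⟨k - 1, by omega⟩) - sortDesc n a ⟨k - 1, by omega⟩
      = (1 / (k : ℝ)) * min (r - topKSum n k a) 0 ∧
    (1 / (k : ℝ)) * min (r - topKSum n k a) 0 ≤ 0 := by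
  have hkpos : (0 : ℝ) < k := by exact_mod_cast hk1
  set b : Fin n → ℝ := sortDesc n a with hb
  set u₀ : ℝ := b ⟨k - 1, by omega⟩ with hu₀
  set T : ℝ := topKSum n k a with hT
  -- rewrite sums of max via sorted vector
  have hsum : ∀ u : ℝ, ∑ i : Fin n, max (a i - u) 0 = ∑ i : Fin n, max (b i - u) 0 :=
    fun u => (sum_comp_sortDesc n a (fun t => max (t - u) 0)).symm
  -- b i ≥ u₀ for i < k, b i ≤ u₀ for i ≥ k
  have hge : ∀ i : Fin n, (i : ℕ) < k → u₀ ≤ b i := by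
    intro i hi
    exact sortDesc_antitone n a (show i ≤ ⟨k - 1, by omega⟩ from by
      simp [Fin.le_def]; omega)
  have hle : ∀ i : Fin n, ¬ (i : ℕ) < k → b i ≤ u₀ := by
    intro i hi
    exact sortDesc_antitone n a (show (⟨k - 1, by omega⟩ : Fin n) ≤ i from by
      simp [Fin.le_def]; omega)
  -- value of the max-sum at u₀
  have hstar : ∑ i : Fin n, max (b i - u₀) 0 = T - k * u₀ := by
    have h1 : ∑ i : Fin n, max (b i - u₀) 0
        = ∑ i : Fin n, ((if (i : ℕ) < k then b i else 0) - (if (i : ℕ) < k then u₀ else 0)) := by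
      apply Finset.sum_congr rfl
      intro i _
      by_cases hi : (i : ℕ) < k
      · simp [hi, max_eq_left, sub_nonneg.mpr (hge i hi)]
      · simp [hi, max_eq_right, sub_nonpos.mpr (hle i hi)]
    rw [h1, Finset.sum_sub_distrib, sum_indicator_const n k hk2 u₀]
    rfl
  -- the key inequality: for all u, S(u) + k u ≥ S(u₀) + k u₀
  have hkey : ∀ u : ℝ, ∑ i : Fin n, max (b i - u₀) 0 + (k : ℝ) * (u₀ - u)
      ≤ ∑ i : Fin n, max (b i - u) 0 := by
    intro u
    have h2 : ∑ i : Fin n, (max (b i - u₀) 0 + (if (i : ℕ) < k then u₀ - u else 0))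
        ≤ ∑ i : Fin n, max (b i - u) 0 := by
      apply Finset.sum_le_sum
      intro i _
      by_cases hi : (i : ℕ) < k
      · have h3 : max (b i - u₀) 0 = b i - u₀ := max_eq_left (sub_nonneg.mpr (hge i hi))
        simp only [hi, if_true, h3]
        have : b i - u₀ + (u₀ - u) = b i - u := by ring
        rw [this]
        exact le_max_left _ _
      · have h3 : max (b i - u₀) 0 = 0 := max_eq_right (sub_nonpos.mpr (hle i hi))
        simp only [hi, if_false, h3, add_zero]
        exact le_max_right _ _
    calc ∑ i : Fin n, max (b i - u₀) 0 + (k : ℝ) * (u₀ - u)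
        = ∑ i : Fin n, (max (b i - u₀) 0 + (if (i : ℕ) < k then u₀ - u else 0)) := by
          rw [Finset.sum_add_distrib, sum_indicator_const n k hk2 (u₀ - u)]
      _ ≤ _ := h2
  refine ⟨?_, ?_, ?_⟩
  · intro u
    have h := hkey u
    have hS := hsum u
    have hS0 := hsum u₀
    simp only [Fproj, hS, hS0]
    have hdiv : ((∑ i : Fin n, max (b i - u₀) 0) - ∑ i : Fin n, max (b i - u) 0) / k
        ≤ u - u₀ := by
      rw [div_le_iff₀ hkpos]; nlinarith [h]
    have hid : 1 / (k : ℝ) * (min (topKSum n k a) r - ∑ i : Fin n, max (b i - u) 0)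
        - 1 / (k : ℝ) * (min (topKSum n k a) r - ∑ i : Fin n, max (b i - u₀) 0)
        = ((∑ i : Fin n, max (b i - u₀) 0) - ∑ i : Fin n, max (b i - u) 0) / k := by
      ring
    linarith [hdiv, hid]
  · simp only [Fproj, hsum u₀, hstar]
    have hmin : min T r - T = min (r - T) 0 := by
      rw [← min_sub_sub_right, sub_self, min_comm]
    field_simp
    rw [← hmin]
    ring
  · have h1 : min (r - T) 0 ≤ 0 := min_le_right _ _
    have h2 : (0 : ℝ) ≤ 1 / k := by positivity
    nlinarith
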